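/- arXiv:1805.12318 — 2 statements merged into one kernel-verified Lean document; each statement's English description precedes it below -/
import Mathlib

section
/- Let G be a group and let L be an associative (not necessarily unital) ring equipped with a G-grading, i.e. a family of additive subgroups (L_g)_{g ∈ G} such that L is the internal direct sum of the L_g and L_g · L_h ⊆ L_{gh} for all g, h ∈ G. Assume L is locally unital with local units in degree 1: for every finite subset F ⊆ L there exists u ∈ L_1 with u·x = x·u = x for all x ∈ F. Then the grading is strong (i.e. for all g, h ∈ G the additive subgroup generated by the products {a·b : a ∈ L_g, b ∈ L_h} equals L_{gh}) if and only if there is a subset S ⊆ G generating G as a monoid such that for every τ ∈ S the additive subgroup generated by {a·b : a ∈ L_τ, b ∈ L_{τ⁻¹}} equals L_1. -/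
/-!
The degrees `g` with `Lg (g * h) ⊆ Lg g · Lg h` for every `h` are closed under multiplication,
by associativity of the product of additive subgroups, and contain `1` thanks to the local units.
They also contain every `τ` with `Lg τ · Lg τ⁻¹ = Lg 1`, so they form a submonoid containing a
monoid generating set `S`, hence all of `G`; the reverse inclusions hold for any grading.
-/

namespace AddSubgroup

variable {R : Type*} [NonUnitalRing R]

def mulClosure (A B : AddSubgroup R) : AddSubgroup R :=
  closure {x | ∃ a ∈ A, ∃ b ∈ B, x = a * b}

variable {A B C D : AddSubgroup R}

theorem mulClosure_le (h : ∀ a ∈ A, ∀ b ∈ B, a * b ∈ C) : mulClosure A B ≤ C :=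
  (closure_le _).mpr <| by
    rintro _ ⟨a, ha, b, hb, rfl⟩
    exact h a ha b hb

theorem mul_mem_mulClosure {a b : R} (ha : a ∈ A) (hb : b ∈ B) : a * b ∈ mulClosure A B :=
  subset_closure ⟨a, ha, b, hb, rfl⟩

theorem mulClosure_mono_right (h : B ≤ C) : mulClosure A B ≤ mulClosure A C :=
  closure_mono fun _ ⟨a, ha, b, hb, hx⟩ => ⟨a, ha, b, h hb, hx⟩

theorem mul_right_mem_mulClosure {u x : R} (hu : u ∈ mulClosure A B)
    (hx : ∀ b ∈ B, b * x ∈ C) : u * x ∈ mulClosure A C := by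
  induction hu using closure_induction with
  | mem _ hy =>
    obtain ⟨a, ha, b, hb, rfl⟩ := hy
    rw [mul_assoc]
    exact mul_mem_mulClosure ha (hx b hb)
  | zero => simp
  | add _ _ _ _ hy hz => simpa [add_mul] using add_mem hy hz
  | neg _ _ hy => simpa [neg_mul] using neg_mem hy

theorem mul_left_mem_mulClosure {a y : R} (hy : y ∈ mulClosure B C)
    (ha : ∀ b ∈ B, a * b ∈ D) : a * y ∈ mulClosure D C := by
  induction hy using closure_induction with
  | mem _ hy =>
    obtain ⟨b, hb, c, hc, rfl⟩ := hy
    rw [← mul_assoc]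
    exact mul_mem_mulClosure (ha b hb) hc
  | zero => simp
  | add _ _ _ _ hy hz => simpa [mul_add] using add_mem hy hz
  | neg _ _ hy => simpa [mul_neg] using neg_mem hy

theorem mulClosure_mulClosure_le (h : ∀ a ∈ A, ∀ b ∈ B, a * b ∈ D) :
    mulClosure A (mulClosure B C) ≤ mulClosure D C :=
  mulClosure_le fun a ha _ hy => mul_left_mem_mulClosure hy (h a ha)

end AddSubgroup

open AddSubgroup

section Graded

variable {G : Type*} [Group G] {L : Type*} [NonUnitalRing L] (Lg : G → AddSubgroup L)

def IsLeftStrongDegree (g : G) : Prop :=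
  ∀ h, Lg (g * h) ≤ mulClosure (Lg g) (Lg h)

variable {Lg}

theorem isLeftStrongDegree_one (hunit : ∀ x, ∃ u ∈ Lg 1, u * x = x) :
    IsLeftStrongDegree Lg 1 := by
  intro h x hx
  obtain ⟨u, hu, hux⟩ := hunit x
  rw [one_mul] at hx
  exact hux ▸ mul_mem_mulClosure hu hx

theorem IsLeftStrongDegree.mul (hmul : ∀ g h : G, ∀ a ∈ Lg g, ∀ b ∈ Lg h, a * b ∈ Lg (g * h))
    {g g' : G} (hg : IsLeftStrongDegree Lg g) (hg' : IsLeftStrongDegree Lg g') :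
    IsLeftStrongDegree Lg (g * g') := fun h =>
  calc Lg (g * g' * h) = Lg (g * (g' * h)) := by rw [mul_assoc]
    _ ≤ mulClosure (Lg g) (Lg (g' * h)) := hg _
    _ ≤ mulClosure (Lg g) (mulClosure (Lg g') (Lg h)) := mulClosure_mono_right (hg' h)
    _ ≤ mulClosure (Lg (g * g')) (Lg h) := mulClosure_mulClosure_le (hmul g g')

/-- A local unit `u ∈ Lg 1 = Lg τ · Lg τ⁻¹` of `x ∈ Lg (τ * h)` writes `x = u * x` as a sum
of products `a * (b * x)` with `a ∈ Lg τ` and `b * x ∈ Lg h`. -/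
theorem isLeftStrongDegree_of_mulClosure_inv_eq
    (hmul : ∀ g h : G, ∀ a ∈ Lg g, ∀ b ∈ Lg h, a * b ∈ Lg (g * h))
    (hunit : ∀ x, ∃ u ∈ Lg 1, u * x = x) {τ : G}
    (hτ : mulClosure (Lg τ) (Lg τ⁻¹) = Lg 1) : IsLeftStrongDegree Lg τ := by
  intro h x hx
  obtain ⟨u, hu, hux⟩ := hunit x
  rw [← hτ] at hu
  refine hux ▸ mul_right_mem_mulClosure hu fun b hb => ?_
  simpa using hmul τ⁻¹ (τ * h) b hb x hx

theorem isLeftStrongDegree_of_mem_closure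
    (hmul : ∀ g h : G, ∀ a ∈ Lg g, ∀ b ∈ Lg h, a * b ∈ Lg (g * h))
    (hunit : ∀ x, ∃ u ∈ Lg 1, u * x = x) {S : Set G}
    (hS : ∀ τ ∈ S, mulClosure (Lg τ) (Lg τ⁻¹) = Lg 1) {g : G}
    (hg : g ∈ Submonoid.closure S) : IsLeftStrongDegree Lg g := by
  induction hg using Submonoid.closure_induction with
  | mem τ hτ => exact isLeftStrongDegree_of_mulClosure_inv_eq hmul hunit (hS τ hτ)
  | one => exact isLeftStrongDegree_one hunit
  | mul _ _ _ _ hg hg' => exact hg.mul hmul hg'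

end Graded

theorem strong_grading_iff_generators_general {G : Type*} [Group G] {L : Type*} [NonUnitalRing L]
    (Lg : G → AddSubgroup L)
    (hmul : ∀ g h : G, ∀ a ∈ Lg g, ∀ b ∈ Lg h, a * b ∈ Lg (g * h))
    (hlocunit : ∀ F : Finset L, ∃ u ∈ Lg 1, ∀ x ∈ F, u * x = x ∧ x * u = x) :
    (∀ g h : G,
        AddSubgroup.closure {x : L | ∃ a ∈ Lg g, ∃ b ∈ Lg h, x = a * b} = Lg (g * h)) ↔
      ∃ S : Set G, Submonoid.closure S = ⊤ ∧
        ∀ τ ∈ S,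
          AddSubgroup.closure {x : L | ∃ a ∈ Lg τ, ∃ b ∈ Lg τ⁻¹, x = a * b} = Lg 1 := by
  constructor
  · intro hstrong
    exact ⟨Set.univ, Submonoid.closure_univ, fun τ _ => by simpa using hstrong τ τ⁻¹⟩
  · rintro ⟨S, hS, hgen⟩ g h
    have hunit : ∀ x, ∃ u ∈ Lg 1, u * x = x := fun x =>
      let ⟨u, hu, hux⟩ := hlocunit {x}
      ⟨u, hu, (hux x (Finset.mem_singleton_self x)).1⟩
    have hg : g ∈ Submonoid.closure S := hS ▸ Submonoid.mem_top g
    exact le_antisymm (mulClosure_le (hmul g h))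
      (isLeftStrongDegree_of_mem_closure hmul hunit hgen hg h)

/-- **Gauge freeness for Cuntz-Pimsner algebras, Lemma on strong gradings.**
Let `G` be a group and `L` an associative (not necessarily unital) ring with a
`G`-grading `(Lg g)_{g ∈ G}` (internal direct sum of additive subgroups, with
`Lg g * Lg h ⊆ Lg (g * h)`), which is locally unital with local units in degree `1`.
Then the grading is strong iff there is a subset `S ⊆ G` generating `G` as a monoid
such that `Lg τ * Lg τ⁻¹` generates `Lg 1` as an additive subgroup for every `τ ∈ S`. -/
theorem strong_grading_iff_generators {G : Type*} [Group G] [DecidableEq G] {L : Type*} [NonUnitalRing L]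
    (Lg : G → AddSubgroup L)
    (hinternal : DirectSum.IsInternal Lg)
    (hmul : ∀ g h : G, ∀ a ∈ Lg g, ∀ b ∈ Lg h, a * b ∈ Lg (g * h))
    (hlocunit : ∀ F : Finset L, ∃ u ∈ Lg 1, ∀ x ∈ F, u * x = x ∧ x * u = x) :
    (∀ g h : G,
        AddSubgroup.closure {x : L | ∃ a ∈ Lg g, ∃ b ∈ Lg h, x = a * b} = Lg (g * h)) ↔
      ∃ S : Set G, Submonoid.closure S = ⊤ ∧
        ∀ τ ∈ S,
          AddSubgroup.closure {x : L | ∃ a ∈ Lg τ, ∃ b ∈ Lg τ⁻¹, x = a * b} = Lg 1 :=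
  strong_grading_iff_generators_general Lg hmul hlocunit
end

section
/- Let G be a group and let L be an associative (not necessarily unital) ring with a G-grading (L_g)_{g ∈ G} which is locally unital with local units in degree 1. Let S ⊆ G be a subset generating G as a monoid, and suppose that for every τ ∈ S the additive subgroup generated by {a·b : a ∈ L_τ, b ∈ L_{τ⁻¹}} equals L_1. Then for EVERY g ∈ G the additive subgroup generated by {a·b : a ∈ L_g, b ∈ L_{g⁻¹}} equals L_1. -/
/-!
Write `A g` for the degree-`g` component viewed as an additive submonoid, so that the hypothesis
reads `A g * A g⁻¹ = A 1` for `g ∈ S`, with products of additive submonoids. The degrees where this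
holds form a submonoid of `G`. It contains `1`, since a local unit `u ∈ A 1` writes any `x ∈ A 1` as
`u * x`. It is closed under products: by associativity,
`A (g * h) * A (g * h)⁻¹ ≥ A g * (A h * A h⁻¹) * A g⁻¹ = A g * A 1 * A g⁻¹ ≥ A g * A g⁻¹ = A 1`,
where the last inequality again uses local units. As `S` generates `G`, this submonoid is all of `G`.
-/

open scoped Pointwise

theorem AddSubgroup.closure_coe_mul_coe_toAddSubmonoid {R : Type*} [NonUnitalNonAssocRing R]
    (A B : AddSubgroup R) :
    (closure ((A : Set R) * (B : Set R))).toAddSubmonoid = A.toAddSubmonoid * B.toAddSubmonoid := by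
  have hneg : -((A : Set R) * (B : Set R)) ⊆ (A : Set R) * (B : Set R) := by
    rintro _ ⟨a, ha, b, hb, hab⟩
    exact ⟨-a, A.neg_mem ha, b, hb, by simp only [neg_mul, hab, neg_neg]⟩
  rw [closure_toAddSubmonoid, Set.union_eq_left.2 hneg, AddSubmonoid.mul_eq_closure_mul_set]
  rfl

theorem AddSubmonoid.le_mul_of_forall_exists_mul_eq_self {R : Type*}
    [NonUnitalNonAssocSemiring R] {U N : AddSubmonoid R} (h : ∀ x ∈ N, ∃ u ∈ U, u * x = x) :
    N ≤ U * N := fun x hx ↦ by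
  obtain ⟨u, hu, hux⟩ := h x hx
  exact hux ▸ mul_mem_mul hu hx

section GradedProducts

variable {G R : Type*} [Group G] [NonUnitalSemiring R] {A : G → AddSubmonoid R}

theorem graded_mul_inv_le_one (hA : ∀ g h, A g * A h ≤ A (g * h)) (g : G) : A g * A g⁻¹ ≤ A 1 :=
  mul_inv_cancel g ▸ hA g g⁻¹

theorem graded_one_mul_inv_one (hA : ∀ g h, A g * A h ≤ A (g * h))
    (hunit : ∀ g, ∀ x ∈ A g, ∃ u ∈ A 1, u * x = x) : A 1 * A 1⁻¹ = A 1 := by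
  refine le_antisymm (graded_mul_inv_le_one hA 1) ?_
  rw [inv_one]
  exact AddSubmonoid.le_mul_of_forall_exists_mul_eq_self (hunit 1)

theorem graded_mul_inv_of_mul_inv (hA : ∀ g h, A g * A h ≤ A (g * h))
    (hunit : ∀ g, ∀ x ∈ A g, ∃ u ∈ A 1, u * x = x) {g h : G} (hg : A g * A g⁻¹ = A 1)
    (hh : A h * A h⁻¹ = A 1) : A (g * h) * A (g * h)⁻¹ = A 1 := by
  refine le_antisymm (graded_mul_inv_le_one hA _) ?_
  calc A 1 = A g * A g⁻¹ := hg.symm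
    _ ≤ A g * (A 1 * A g⁻¹) :=
      AddSubmonoid.mul_le_mul_right (AddSubmonoid.le_mul_of_forall_exists_mul_eq_self (hunit _))
    _ = A g * (A h * A h⁻¹) * A g⁻¹ := by rw [hh, mul_assoc]
    _ = A g * A h * (A h⁻¹ * A g⁻¹) := by simp only [mul_assoc]
    _ ≤ A (g * h) * A (g * h)⁻¹ := mul_inv_rev g h ▸ AddSubmonoid.mul_le_mul (hA g h) (hA _ _)

end GradedProducts

theorem degreeOne_from_generators_general {G : Type*} [Group G] {L : Type*} [NonUnitalRing L]
    (Lg : G → AddSubgroup L)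
    (hmul : ∀ g h : G, ∀ a ∈ Lg g, ∀ b ∈ Lg h, a * b ∈ Lg (g * h))
    (hlocunit : ∀ F : Finset L, ∃ u ∈ Lg 1, ∀ x ∈ F, u * x = x ∧ x * u = x)
    (S : Set G) (hS : Submonoid.closure S = ⊤)
    (hgen : ∀ τ ∈ S,
      AddSubgroup.closure {x : L | ∃ a ∈ Lg τ, ∃ b ∈ Lg τ⁻¹, x = a * b} = Lg 1) :
    ∀ g : G,
      AddSubgroup.closure {x : L | ∃ a ∈ Lg g, ∃ b ∈ Lg g⁻¹, x = a * b} = Lg 1 := by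
  let A : G → AddSubmonoid L := fun g ↦ (Lg g).toAddSubmonoid
  have hA (g h : G) : A g * A h ≤ A (g * h) := AddSubmonoid.mul_le.2 (hmul g h)
  have hunit (g : G) (x : L) (_ : x ∈ A g) : ∃ u ∈ A 1, u * x = x := by
    obtain ⟨u, hu, hux⟩ := hlocunit {x}
    exact ⟨u, hu, (hux x (Finset.mem_singleton_self x)).1⟩
  have hprod (g : G) : AddSubgroup.closure {x : L | ∃ a ∈ Lg g, ∃ b ∈ Lg g⁻¹, x = a * b} = Lg 1 ↔
      A g * A g⁻¹ = A 1 := by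
    have hset : {x : L | ∃ a ∈ Lg g, ∃ b ∈ Lg g⁻¹, x = a * b} = (Lg g : Set L) * (Lg g⁻¹ : Set L) := by
      ext; simp [Set.mem_mul, eq_comm]
    rw [← AddSubgroup.toAddSubmonoid_inj, hset, AddSubgroup.closure_coe_mul_coe_toAddSubmonoid]
  intro g
  have hg : g ∈ Submonoid.closure S := by rw [hS]; exact Submonoid.mem_top g
  induction hg using Submonoid.closure_induction with
  | mem τ hτ => exact hgen τ hτ
  | one => exact (hprod 1).2 (graded_one_mul_inv_one hA hunit)
  | mul g h _ _ hg hh =>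
    exact (hprod _).2 (graded_mul_inv_of_mul_inv hA hunit ((hprod g).1 hg) ((hprod h).1 hh))

/-- Let `G` be a group and `L` an associative (not necessarily unital) ring with a
`G`-grading `(Lg g)_{g ∈ G}` (internal direct sum of additive subgroups, with
`Lg g * Lg h ⊆ Lg (g * h)`), which is locally unital with local units in degree `1`.
If `S ⊆ G` generates `G` as a monoid and for every `τ ∈ S` the additive subgroup
generated by `Lg τ * Lg τ⁻¹` equals `Lg 1`, then the same holds for every `g ∈ G`. -/
theorem degreeOne_from_generators {G : Type*} [Group G] [DecidableEq G] {L : Type*} [NonUnitalRing L]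
    (Lg : G → AddSubgroup L)
    (hinternal : DirectSum.IsInternal Lg)
    (hmul : ∀ g h : G, ∀ a ∈ Lg g, ∀ b ∈ Lg h, a * b ∈ Lg (g * h))
    (hlocunit : ∀ F : Finset L, ∃ u ∈ Lg 1, ∀ x ∈ F, u * x = x ∧ x * u = x)
    (S : Set G) (hS : Submonoid.closure S = ⊤)
    (hgen : ∀ τ ∈ S,
      AddSubgroup.closure {x : L | ∃ a ∈ Lg τ, ∃ b ∈ Lg τ⁻¹, x = a * b} = Lg 1) :
    ∀ g : G,
      AddSubgroup.closure {x : L | ∃ a ∈ Lg g, ∃ b ∈ Lg g⁻¹, x = a * b} = Lg 1 :=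
  degreeOne_from_generators_general Lg hmul hlocunit S hS hgen
end
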